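/- (Global convergence to the neutral equilibrium below threshold.) Let A ∈ ℝ^{N×N} be symmetric with largest eigenvalue λ*, let d > 0, α ≥ 0, γ > 0 with α + γλ* > 0, and let u satisfy 0 ≤ u < d/(α + γλ*). Let S : ℝ → ℝ be continuously differentiable, odd, nondecreasing, concave on [0,∞), with S′(0) = 1, |S(y)| ≤ 1 for all y, and S(y) = 0 only if y = 0. Then every solution x : [0,∞) → ℝ^N of ẋ = −d x + u S(α x + γ A x) (S applied componentwise) converges to the origin: x(t) → 0 as t → ∞. -/

import Mathlib

/-!
Put `B = α + γ A`, `λ = α + γ λ*` and `y = B x`, and let `F` be the primitive of `S` with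
`F 0 = 0`. Along a solution, `W = ∑ᵢ F (yᵢ)` satisfies
`W' = S(y) ⬝ (-d y + u B S(y)) ≤ -(d - u λ) ‖S(y)‖²`: the quadratic form of `B` is at most
`λ ‖·‖²`, and `S(a)² ≤ a S(a)` because the concave `S` lies below its tangent `a` at `0`.
Since `|S| ≤ 1` the trajectory is bounded, say `|yᵢ| ≤ Y`, and on `[-Y, Y]` concavity gives
`(S Y / Y) F ≤ S²`, so `W` decays exponentially. As `S² ≤ 2 F`, so does the forcing term
`u S(y)` of the linear equation `ẋ = -d x + u S(y)`, and variation of constants gives `x → 0`.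
-/

open Set Filter Topology Matrix Real

lemma hasDerivAt_exp_const_mul (c s : ℝ) :
    HasDerivAt (fun s => exp (c * s)) (c * exp (c * s)) s := by
  simpa [mul_comm] using ((hasDerivAt_id s).const_mul c).exp

lemma abs_le_of_hasDerivAt_neg_mul_add {g f : ℝ → ℝ} {d b K : ℝ} (hbd : b < d)
    (hg : ∀ t, 0 ≤ t → HasDerivAt g (-d * g t + f t) t)
    (hf : ∀ t, 0 ≤ t → |f t| ≤ K * exp (-b * t)) {t : ℝ} (ht : 0 ≤ t) :
    |g t| ≤ (|g 0| + K / (d - b)) * exp (-b * t) := by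
  have hK : 0 ≤ K := by simpa using (abs_nonneg _).trans (hf 0 le_rfl)
  have hdb : 0 < d - b := sub_pos.2 hbd
  have hφ : ∀ s, 0 ≤ s → HasDerivAt (fun s => exp (d * s) * g s) (exp (d * s) * f s) s :=
    fun s hs => ((hasDerivAt_exp_const_mul d s).mul (hg s hs)).congr_deriv (by ring)
  have hB : ∀ s, HasDerivAt (fun s => |g 0| + K / (d - b) * (exp ((d - b) * s) - 1))
      (K * exp ((d - b) * s)) s := fun s =>
    ((((hasDerivAt_exp_const_mul (d - b) s).sub_const 1).const_mul (K / (d - b))).const_add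
      |g 0|).congr_deriv (by field_simp)
  have hφ_le := image_norm_le_of_norm_deriv_right_le_deriv_boundary
    (fun s hs => (hφ s hs.1).continuousAt.continuousWithinAt)
    (fun s hs => (hφ s hs.1).hasDerivWithinAt) (by simp) hB
    (fun s hs => by
      rw [norm_mul, norm_of_nonneg (exp_pos _).le, Real.norm_eq_abs]
      calc exp (d * s) * |f s| ≤ exp (d * s) * (K * exp (-b * s)) :=
            mul_le_mul_of_nonneg_left (hf s hs.1) (exp_pos _).le
        _ = K * exp ((d - b) * s) := by rw [mul_left_comm, ← exp_add]; ring_nf)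
    ⟨ht, le_rfl⟩
  rw [norm_mul, norm_of_nonneg (exp_pos _).le, Real.norm_eq_abs] at hφ_le
  have hdt : exp (-d * t) ≤ exp (-b * t) := exp_le_exp.2 (by nlinarith)
  have hK' : 0 ≤ K / (d - b) := div_nonneg hK hdb.le
  calc |g t| = exp (-d * t) * (exp (d * t) * |g t|) := by
        rw [← mul_assoc, ← exp_add]; simp
    _ ≤ exp (-d * t) * (|g 0| + K / (d - b) * (exp ((d - b) * t) - 1)) := by gcongr
    _ = |g 0| * exp (-d * t) + K / (d - b) * (exp (-b * t) - exp (-d * t)) := by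
        rw [mul_add, mul_left_comm, mul_sub, ← exp_add]; ring_nf
    _ ≤ (|g 0| + K / (d - b)) * exp (-b * t) := by
        nlinarith [abs_nonneg (g 0), exp_pos (-d * t)]

lemma le_mul_exp_of_hasDerivAt_le_neg_mul {W W' : ℝ → ℝ} {c : ℝ}
    (hW : ∀ t, 0 ≤ t → HasDerivAt W (W' t) t) (hW' : ∀ t, 0 ≤ t → W' t ≤ -c * W t)
    {t : ℝ} (ht : 0 ≤ t) : W t ≤ W 0 * exp (-c * t) := by
  have := le_gronwallBound_of_liminf_deriv_right_le (f := W) (K := -c) (ε := 0) (b := t)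
    (fun s hs => (hW s hs.1).continuousAt.continuousWithinAt)
    (fun s hs _ hr => (hW s hs.1).hasDerivWithinAt.liminf_right_slope_le hr) le_rfl
    (fun s hs => by simpa using hW' s hs.1) t ⟨ht, le_rfl⟩
  simpa [gronwallBound_ε0] using this

lemma abs_le_sqrt_mul_exp_of_sq_le {a C c t : ℝ} (h : a ^ 2 ≤ C * exp (-c * t)) :
    |a| ≤ √C * exp (-(c / 2) * t) := by
  refine (abs_le_sqrt h).trans_eq ?_
  rw [sqrt_mul' C (exp_pos _).le, ← exp_half]
  ring_nf

lemma tendsto_nhds_zero_of_abs_le_mul_exp {g : ℝ → ℝ} {C b : ℝ} (hb : 0 < b)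
    (h : ∀ t, 0 ≤ t → |g t| ≤ C * exp (-b * t)) : Tendsto g atTop (𝓝 0) := by
  refine squeeze_zero_norm' ((eventually_ge_atTop 0).mono h) ?_
  simpa [neg_mul] using
    (tendsto_exp_neg_atTop_nhds_zero.comp (tendsto_id.const_mul_atTop hb)).const_mul C

lemma Matrix.IsSymm.dotProduct_mulVec_le {ι : Type*} [Fintype ι] [DecidableEq ι]
    {A : Matrix ι ι ℝ} (hA : A.IsSymm) {c : ℝ}
    (hc : ∀ μ : ℝ, (∃ v : ι → ℝ, v ≠ 0 ∧ A *ᵥ v = μ • v) → μ ≤ c) (z : ι → ℝ) :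
    z ⬝ᵥ A *ᵥ z ≤ c * (z ⬝ᵥ z) := by
  have hpsd : (c • 1 - A).PosSemidef := by
    refine posSemidef_iff_isHermitian_and_spectrum_nonneg.2
      ⟨(isHermitian_one.smul (.all c)).sub (isHermitian_iff_isSymm.2 hA), ?_⟩
    rw [← Algebra.algebraMap_eq_smul_one, ← spectrum.singleton_sub_eq]
    rintro _ ⟨_, rfl, μ, hμ, rfl⟩
    rw [← spectrum_toLin', ← Module.End.hasEigenvalue_iff_mem_spectrum] at hμ
    obtain ⟨v, hv, hv0⟩ := hμ.exists_hasEigenvector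
    simpa using hc μ ⟨v, hv0, Module.End.mem_eigenspace_iff.1 hv⟩
  have := hpsd.dotProduct_mulVec_nonneg z
  simp only [star_trivial, sub_mulVec, smul_mulVec, one_mulVec, dotProduct_sub, dotProduct_smul,
    smul_eq_mul] at this
  linarith

section Concave
variable {f : ℝ → ℝ}

lemma ConcaveOn.mul_map_le_mul_map_of_map_zero (hf : ConcaveOn ℝ (Ici 0) f) (h0 : f 0 = 0)
    {a b : ℝ} (ha : 0 ≤ a) (hab : a ≤ b) : a * f b ≤ b * f a := by
  rcases ha.eq_or_lt with rfl | ha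
  · simp [h0]
  have hb := ha.trans_le hab
  have := hf.antitoneOn_slope_gt self_mem_Ici ⟨ha.le, ha⟩ ⟨hb.le, hb⟩ hab
  simp only [slope_def_field, h0, sub_zero] at this
  rw [div_le_div_iff₀ hb ha] at this
  linarith

lemma ConcaveOn.map_le_mul_of_hasDerivAt_zero (hf : ConcaveOn ℝ (Ici 0) f) (h0 : f 0 = 0)
    {s : ℝ} (hs : HasDerivAt f s 0) {a : ℝ} (ha : 0 ≤ a) : f a ≤ s * a := by
  rcases ha.eq_or_lt with rfl | ha
  · simp [h0]
  have := hf.slope_le_of_hasDerivAt self_mem_Ici ha.le ha hs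
  rwa [slope_def_field, h0, sub_zero, sub_zero, div_le_iff₀ ha] at this

end Concave

section Saturation
variable {S : ℝ → ℝ}

lemma sq_le_mul_of_odd_of_le_self (hodd : Function.Odd S) (hmono : Monotone S)
    (hle : ∀ a, 0 ≤ a → S a ≤ a) (a : ℝ) : S a ^ 2 ≤ a * S a := by
  have key : ∀ a, 0 ≤ a → S a ^ 2 ≤ a * S a := fun a ha => by
    have : 0 ≤ S a := hodd.map_zero ▸ hmono ha
    nlinarith [hle a ha]
  rcases le_total 0 a with ha | ha
  · exact key a ha
  · simpa [hodd a] using key (-a) (neg_nonneg.2 ha)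

noncomputable def potential (S : ℝ → ℝ) (a : ℝ) : ℝ := ∫ s in (0 : ℝ)..a, S s

lemma hasDerivAt_potential (hS : Continuous S) (a : ℝ) : HasDerivAt (potential S) (S a) a :=
  (hS.integral_hasStrictDerivAt 0 a).hasDerivAt

lemma potential_neg (hodd : Function.Odd S) (a : ℝ) : potential S (-a) = potential S a := by
  have h : ∫ x in (0 : ℝ)..a, S (-x) = ∫ x in -a..-0, S x :=
    intervalIntegral.integral_comp_neg S
  simp_rw [hodd _, intervalIntegral.integral_neg, neg_zero] at h
  rw [intervalIntegral.integral_symm 0 (-a)] at h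
  exact (neg_inj.1 h).symm

lemma potential_le_mul (hodd : Function.Odd S) (hmono : Monotone S) (a : ℝ) :
    potential S a ≤ a * S a := by
  have key : ∀ a, 0 ≤ a → potential S a ≤ a * S a := fun a ha => by
    simpa [potential] using intervalIntegral.integral_mono_on (μ := MeasureTheory.volume) ha
      hmono.intervalIntegrable intervalIntegrable_const fun s hs => hmono hs.2
  rcases le_total 0 a with ha | ha
  · exact key a ha
  · simpa [potential_neg hodd, hodd a] using key (-a) (neg_nonneg.2 ha)

lemma mul_le_two_mul_potential (hodd : Function.Odd S) (hmono : Monotone S)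
    (hconc : ConcaveOn ℝ (Ici 0) S) (a : ℝ) : a * S a ≤ 2 * potential S a := by
  have key : ∀ a, 0 ≤ a → a * S a ≤ 2 * potential S a := fun a ha => by
    rcases ha.eq_or_lt with rfl | ha
    · simp [potential]
    have hchord : ∫ s in (0 : ℝ)..a, S a / a * s ≤ potential S a :=
      intervalIntegral.integral_mono_on ha.le (Continuous.intervalIntegrable (by fun_prop) _ _)
        hmono.intervalIntegrable fun s hs => by
          rw [div_mul_eq_mul_div, div_le_iff₀ ha, mul_comm, mul_comm (S s)]
          exact hconc.mul_map_le_mul_map_of_map_zero hodd.map_zero hs.1 hs.2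
    calc a * S a = 2 * ∫ s in (0 : ℝ)..a, S a / a * s := by
          rw [intervalIntegral.integral_const_mul, integral_id]; field_simp; ring
      _ ≤ 2 * potential S a := by gcongr
  rcases le_total 0 a with ha | ha
  · exact key a ha
  · simpa [potential_neg hodd, hodd a] using key (-a) (neg_nonneg.2 ha)

lemma sq_le_two_mul_potential (hodd : Function.Odd S) (hmono : Monotone S)
    (hconc : ConcaveOn ℝ (Ici 0) S) (hsq : ∀ a, S a ^ 2 ≤ a * S a) (a : ℝ) :
    S a ^ 2 ≤ 2 * potential S a :=
  (hsq a).trans (mul_le_two_mul_potential hodd hmono hconc a)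

lemma mul_potential_le_mul_sq (hodd : Function.Odd S) (hmono : Monotone S)
    (hconc : ConcaveOn ℝ (Ici 0) S) {Y a : ℝ} (ha : |a| ≤ Y) :
    S Y * potential S a ≤ Y * S a ^ 2 := by
  have key : ∀ a, 0 ≤ a → a ≤ Y → S Y * potential S a ≤ Y * S a ^ 2 := fun a ha haY => by
    have hSa : 0 ≤ S a := hodd.map_zero ▸ hmono ha
    have hSY : 0 ≤ S Y := hodd.map_zero ▸ hmono (ha.trans haY)
    calc S Y * potential S a ≤ S Y * (a * S a) :=
          mul_le_mul_of_nonneg_left (potential_le_mul hodd hmono a) hSY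
      _ = (a * S Y) * S a := by ring
      _ ≤ (Y * S a) * S a := mul_le_mul_of_nonneg_right
          (hconc.mul_map_le_mul_map_of_map_zero hodd.map_zero ha haY) hSa
      _ = Y * S a ^ 2 := by ring
  rcases le_total 0 a with h | h
  · exact key a h ((le_abs_self a).trans ha)
  · simpa [potential_neg hodd, hodd a] using key (-a) (neg_nonneg.2 h) ((neg_le_abs a).trans ha)

lemma div_mul_sum_potential_le {ι : Type*} [Fintype ι] (hodd : Function.Odd S)
    (hmono : Monotone S) (hconc : ConcaveOn ℝ (Ici 0) S) {Y : ℝ} (hY : 0 < Y) {y : ι → ℝ}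
    (hy : ∀ i, |y i| ≤ Y) : S Y / Y * ∑ i, potential S (y i) ≤ S ∘ y ⬝ᵥ S ∘ y := by
  rw [Finset.mul_sum]
  refine Finset.sum_le_sum fun i _ => ?_
  rw [div_mul_eq_mul_div, div_le_iff₀ hY, Function.comp_apply, ← sq, mul_comm _ Y]
  exact mul_potential_le_mul_sq hodd hmono hconc (hy i)

end Saturation

section Dynamics
variable {ι : Type*} [Fintype ι] {B : Matrix ι ι ℝ} {S : ℝ → ℝ} {d u : ℝ} {x : ℝ → ι → ℝ}

lemma comp_dotProduct_neg_smul_add_le {lam : ℝ} (hB : ∀ v, v ⬝ᵥ B *ᵥ v ≤ lam * (v ⬝ᵥ v))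
    (hd : 0 ≤ d) (hu : 0 ≤ u) (hS : ∀ a, S a ^ 2 ≤ a * S a) (y : ι → ℝ) :
    S ∘ y ⬝ᵥ (-d • y + u • B *ᵥ (S ∘ y)) ≤ -(d - u * lam) * (S ∘ y ⬝ᵥ S ∘ y) := by
  have hzy : S ∘ y ⬝ᵥ S ∘ y ≤ S ∘ y ⬝ᵥ y :=
    Finset.sum_le_sum fun i _ => by simpa [sq, mul_comm] using hS (y i)
  rw [dotProduct_add, dotProduct_smul, dotProduct_smul, smul_eq_mul, smul_eq_mul]
  nlinarith [mul_le_mul_of_nonneg_left (hB (S ∘ y)) hu, mul_le_mul_of_nonneg_left hzy hd]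

lemma hasDerivAt_sum_potential_mulVec (hS : Continuous S) {x' : ι → ℝ} {t : ℝ}
    (hx : HasDerivAt x x' t) :
    HasDerivAt (fun t => ∑ i, potential S ((B *ᵥ x t) i)) (S ∘ (B *ᵥ x t) ⬝ᵥ B *ᵥ x') t := by
  have hy : HasDerivAt (fun t => B *ᵥ x t) (B *ᵥ x') t :=
    (LinearMap.toContinuousLinearMap B.mulVecLin).hasFDerivAt.comp_hasDerivAt t hx
  exact HasDerivAt.fun_sum fun i _ => (hasDerivAt_potential hS _).comp t (hasDerivAt_pi.1 hy i)

lemma hasDerivAt_apply_of_hasDerivAt {t : ℝ}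
    (hx : HasDerivAt x (-d • x t + u • S ∘ (B *ᵥ x t)) t) (i : ι) :
    HasDerivAt (fun t => x t i) (-d * x t i + u * S ((B *ᵥ x t) i)) t := by
  simpa using hasDerivAt_pi.1 hx i

lemma norm_le_of_hasDerivAt (hd : 0 < d) (hu : 0 ≤ u) (hS : ∀ y, |S y| ≤ 1)
    (hx : ∀ t, 0 ≤ t → HasDerivAt x (-d • x t + u • S ∘ (B *ᵥ x t)) t) {t : ℝ} (ht : 0 ≤ t) :
    ‖x t‖ ≤ ‖x 0‖ + u / d := by
  refine (pi_norm_le_iff_of_nonneg (by positivity)).2 fun i => ?_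
  have := abs_le_of_hasDerivAt_neg_mul_add (b := 0) (K := u) hd
    (fun t ht => hasDerivAt_apply_of_hasDerivAt (hx t ht) i)
    (fun t _ => by simpa [abs_mul, abs_of_nonneg hu] using mul_le_mul_of_nonneg_left (hS _) hu) ht
  simp only [neg_zero, zero_mul, exp_zero, mul_one, sub_zero] at this
  simpa using this.trans (add_le_add_left (norm_le_pi_norm (x 0) i) _)

lemma exists_pos_forall_abs_mulVec_apply_le {R : ℝ} (hR : ∀ t, 0 ≤ t → ‖x t‖ ≤ R) :
    ∃ Y > 0, ∀ t, 0 ≤ t → ∀ i, |(B *ᵥ x t) i| ≤ Y := by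
  set L := LinearMap.toContinuousLinearMap B.mulVecLin
  have hR0 : 0 ≤ R := (norm_nonneg _).trans (hR 0 le_rfl)
  refine ⟨‖L‖ * R + 1, by positivity, fun t ht i => ?_⟩
  calc |(B *ᵥ x t) i| ≤ ‖L (x t)‖ := norm_le_pi_norm (B *ᵥ x t) i
    _ ≤ ‖L‖ * R := L.le_of_opNorm_le_of_le le_rfl (hR t ht)
    _ ≤ ‖L‖ * R + 1 := le_add_of_nonneg_right zero_le_one

theorem tendsto_nhds_zero_of_hasDerivAt_saturated {lam : ℝ}
    (hB : ∀ v, v ⬝ᵥ B *ᵥ v ≤ lam * (v ⬝ᵥ v)) (hd : 0 < d) (hu : 0 ≤ u) (hlam : u * lam < d)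
    (hScont : Continuous S) (hSodd : Function.Odd S) (hSmono : Monotone S)
    (hSconc : ConcaveOn ℝ (Ici 0) S) (hS' : HasDerivAt S 1 0)
    (hSbd : ∀ y, |S y| ≤ 1) (hSzero : ∀ y, S y = 0 → y = 0)
    (hx : ∀ t, 0 ≤ t → HasDerivAt x (-d • x t + u • S ∘ (B *ᵥ x t)) t) :
    Tendsto x atTop (𝓝 0) := by
  obtain ⟨Y, hY, hyY⟩ := exists_pos_forall_abs_mulVec_apply_le (B := B) fun t ht =>
    norm_le_of_hasDerivAt hd hu hSbd hx ht
  have hSY : 0 < S Y := (hSodd.map_zero ▸ hSmono hY.le).lt_of_ne' fun h => hY.ne' (hSzero Y h)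
  have hsq : ∀ a, S a ^ 2 ≤ a * S a := sq_le_mul_of_odd_of_le_self hSodd hSmono fun a ha => by
    simpa using hSconc.map_le_mul_of_hasDerivAt_zero hSodd.map_zero hS' ha
  have hF : ∀ a, S a ^ 2 ≤ 2 * potential S a := sq_le_two_mul_potential hSodd hSmono hSconc hsq
  have hF0 : ∀ a, 0 ≤ potential S a := fun a => by nlinarith [hF a, sq_nonneg (S a)]
  set W := fun t => ∑ i, potential S ((B *ᵥ x t) i)
  -- `c ≤ d` keeps the decay rate `c / 2` of the forcing term below the damping rate `d`
  set c := min ((d - u * lam) * (S Y / Y)) d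
  have hc : 0 < c := lt_min (by have := sub_pos.2 hlam; positivity) hd
  have hW' : ∀ t, 0 ≤ t →
      S ∘ (B *ᵥ x t) ⬝ᵥ B *ᵥ (-d • x t + u • S ∘ (B *ᵥ x t)) ≤ -c * W t := fun t ht => by
    rw [mulVec_add, mulVec_smul, mulVec_smul]
    refine (comp_dotProduct_neg_smul_add_le hB hd.le hu hsq _).trans ?_
    have hkW := div_mul_sum_potential_le hSodd hSmono hSconc hY (hyY t ht)
    have hcW : c * W t ≤ (d - u * lam) * (S Y / Y) * W t :=
      mul_le_mul_of_nonneg_right (min_le_left _ _) (Finset.sum_nonneg fun j _ => hF0 _)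
    nlinarith [mul_le_mul_of_nonneg_left hkW (sub_pos.2 hlam).le]
  have hW : ∀ t, 0 ≤ t → W t ≤ W 0 * exp (-c * t) := fun t ht =>
    le_mul_exp_of_hasDerivAt_le_neg_mul
      (fun t ht => hasDerivAt_sum_potential_mulVec hScont (hx t ht)) hW' ht
  have hforce : ∀ t, 0 ≤ t → ∀ i,
      |u * S ((B *ᵥ x t) i)| ≤ u * √(2 * W 0) * exp (-(c / 2) * t) := fun t ht i => by
    have hFW : potential S ((B *ᵥ x t) i) ≤ W t :=
      Finset.single_le_sum (f := fun j => potential S ((B *ᵥ x t) j)) (fun j _ => hF0 _)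
        (Finset.mem_univ i)
    rw [abs_mul, abs_of_nonneg hu, mul_assoc]
    refine mul_le_mul_of_nonneg_left (abs_le_sqrt_mul_exp_of_sq_le ?_) hu
    nlinarith [hF ((B *ᵥ x t) i), hW t ht]
  have hcd : c / 2 < d := by linarith [min_le_right ((d - u * lam) * (S Y / Y)) d]
  exact tendsto_pi_nhds.2 fun i => tendsto_nhds_zero_of_abs_le_mul_exp (half_pos hc)
    fun t ht => abs_le_of_hasDerivAt_neg_mul_add hcd
      (fun t ht => hasDerivAt_apply_of_hasDerivAt (hx t ht) i) (fun t ht => hforce t ht i) ht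

end Dynamics

theorem global_convergence_below_threshold_general {N : ℕ} (A : Matrix (Fin N) (Fin N) ℝ)
    (hA : A.IsSymm) (lamStar : ℝ)
    (hmax : ∀ μ : ℝ, (∃ v : Fin N → ℝ, v ≠ 0 ∧ A.mulVec v = μ • v) → μ ≤ lamStar)
    (d α γ u : ℝ) (hd : 0 < d) (hγ : 0 < γ)
    (hsum : 0 < α + γ * lamStar) (hu0 : 0 ≤ u) (hu : u < d / (α + γ * lamStar))
    (S : ℝ → ℝ) (hSreg : ContDiff ℝ 1 S)
    (hSodd : ∀ y, S (-y) = -S y) (hSmono : Monotone S)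
    (hSconc : ConcaveOn ℝ (Set.Ici 0) S) (hS'0 : deriv S 0 = 1)
    (hSbd : ∀ y, |S y| ≤ 1) (hSzero : ∀ y, S y = 0 → y = 0)
    (x : ℝ → Fin N → ℝ)
    (hx : ∀ t : ℝ, 0 ≤ t → HasDerivAt x
        (-d • x t + u • fun i => S ((α • x t + γ • A.mulVec (x t)) i)) t) :
    Filter.Tendsto x Filter.atTop (nhds 0) := by
  set B := α • (1 : Matrix (Fin N) (Fin N) ℝ) + γ • A
  have hBv : ∀ v, B *ᵥ v = α • v + γ • A *ᵥ v := fun v => by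
    simp [B, add_mulVec, smul_mulVec]
  have hS' : HasDerivAt S 1 0 := hS'0 ▸ (hSreg.differentiable one_ne_zero 0).hasDerivAt
  refine tendsto_nhds_zero_of_hasDerivAt_saturated (B := B) (lam := α + γ * lamStar)
    (fun v => ?_) hd hu0 ((lt_div_iff₀ hsum).1 hu) hSreg.continuous hSodd hSmono hSconc hS'
    hSbd hSzero fun t ht => by rw [hBv]; exact hx t ht
  rw [hBv, dotProduct_add, dotProduct_smul, dotProduct_smul, smul_eq_mul, smul_eq_mul]
  nlinarith [mul_le_mul_of_nonneg_left (hA.dotProduct_mulVec_le hmax v) hγ.le]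

/-- Global convergence to the neutral equilibrium below threshold: for symmetric `A`
with largest eigenvalue `λ*`, homogeneous attention `0 ≤ u < d/(α + γλ*)`, and a
saturation function `S` as in the model, every solution of
`ẋ = −dx + uS(αx + γAx)` converges to the origin. -/
theorem global_convergence_below_threshold {N : ℕ} (A : Matrix (Fin N) (Fin N) ℝ)
    (hA : A.IsSymm) (lamStar : ℝ)
    (heig : ∃ v : Fin N → ℝ, v ≠ 0 ∧ A.mulVec v = lamStar • v)
    (hmax : ∀ μ : ℝ, (∃ v : Fin N → ℝ, v ≠ 0 ∧ A.mulVec v = μ • v) → μ ≤ lamStar)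
    (d α γ u : ℝ) (hd : 0 < d) (hα : 0 ≤ α) (hγ : 0 < γ)
    (hsum : 0 < α + γ * lamStar) (hu0 : 0 ≤ u) (hu : u < d / (α + γ * lamStar))
    (S : ℝ → ℝ) (hSreg : ContDiff ℝ 1 S)
    (hSodd : ∀ y, S (-y) = -S y) (hSmono : Monotone S)
    (hSconc : ConcaveOn ℝ (Set.Ici 0) S) (hS'0 : deriv S 0 = 1)
    (hSbd : ∀ y, |S y| ≤ 1) (hSzero : ∀ y, S y = 0 → y = 0)
    (x : ℝ → Fin N → ℝ)
    (hx : ∀ t : ℝ, 0 ≤ t → HasDerivAt x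
        (-d • x t + u • fun i => S ((α • x t + γ • A.mulVec (x t)) i)) t) :
    Filter.Tendsto x Filter.atTop (nhds 0) :=
  global_convergence_below_threshold_general A hA lamStar hmax d α γ u hd hγ hsum hu0 hu S hSreg
    hSodd hSmono hSconc hS'0 hSbd hSzero x hx
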